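/- In the braid group B_p on p strands (p ≥ 2), for any q with 1 ≤ q < p, the braid word identity (σ₁σ₂⋯σ_{p-1})^q = (σ₁σ₂⋯σ_{q-1})^q · (σ_q σ_{q+1}⋯σ_{p-1}) · (σ_{q-1} σ_q⋯σ_{p-2}) ⋯ (σ₁σ₂⋯σ_{p-q}) holds. -/

import Mathlib

/-- The braid relations on `p-1` Artin generators:
`σᵢσⱼ = σⱼσᵢ` when `|i-j| ≥ 2`, and `σᵢσ_{i+1}σᵢ = σ_{i+1}σᵢσ_{i+1}`. -/
def braidRels (p : ℕ) : Set (FreeGroup (Fin (p - 1))) :=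
  {x | ∃ i j : Fin (p - 1), ((i : ℕ) + 2 ≤ j ∨ (j : ℕ) + 2 ≤ i) ∧
      x = FreeGroup.of i * FreeGroup.of j * (FreeGroup.of j * FreeGroup.of i)⁻¹} ∪
  {x | ∃ i j : Fin (p - 1), (i : ℕ) + 1 = j ∧
      x = FreeGroup.of i * FreeGroup.of j * FreeGroup.of i *
        (FreeGroup.of j * FreeGroup.of i * FreeGroup.of j)⁻¹}

/-- The braid group `B_p` on `p` strands. -/
def BraidGroup (p : ℕ) := PresentedGroup (braidRels p)

instance (p : ℕ) : Group (BraidGroup p) := by unfold BraidGroup; infer_instance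

/-- The Artin generator `σ_{i+1}` of `B_p`, for `i : Fin (p-1)`. -/
def braidσ {p : ℕ} (i : Fin (p - 1)) : BraidGroup p := PresentedGroup.of i

/-!
Write `δ_m = σ_1 ⋯ σ_m`. Conjugation by `δ_m` sends `σ_i` to `σ_{i+1}` for `i < m`, and
`σ_{m+1} δ_{m+1} = δ_m σ_{m+1} σ_m`; together these give
`δ_{m+1}^q = δ_m^q · σ_{m+1} σ_m ⋯ σ_{m-q+2}`.
Induction on the number of strands thus appends one descending word per strand, and its letters
distribute over the ascending factors of the right-hand side, since each `σ_j` commutes with the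
lower ascending factors it has to pass.
-/

namespace BraidGroup

/-- The generator `σ_{i+1}` (0-based), extended by `1` beyond `i < p - 1` so that braid words can
be indexed by `ℕ`. -/
def gen (p i : ℕ) : BraidGroup p := if h : i < p - 1 then braidσ ⟨i, h⟩ else 1

/-- `asc p a n = σ_{a+1} σ_{a+2} ⋯ σ_{a+n}`. -/
def asc (p a n : ℕ) : BraidGroup p := ((List.range' a n).map (gen p)).prod

/-- `desc p a n = σ_{a+n} ⋯ σ_{a+2} σ_{a+1}`. -/
def desc (p a : ℕ) : ℕ → BraidGroup p
  | 0 => 1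
  | n + 1 => gen p (a + n) * desc p a n

def stair (p : ℕ) : ℕ → ℕ → BraidGroup p
  | 0, _ => 1
  | q + 1, L => asc p q L * stair p q L

variable {p : ℕ}

theorem gen_of_lt {i : ℕ} (h : i < p - 1) : gen p i = braidσ ⟨i, h⟩ := dif_pos h

theorem gen_commute {i j : ℕ} (h : i + 2 ≤ j) : Commute (gen p i) (gen p j) := by
  unfold gen
  split_ifs with hi hj
  · exact PresentedGroup.mk_eq_mk_of_mul_inv_mem (Or.inl ⟨⟨i, hi⟩, ⟨j, hj⟩, Or.inl h, rfl⟩)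
  all_goals simp

theorem gen_braid {i : ℕ} (h : i + 2 ≤ p - 1) :
    gen p i * gen p (i + 1) * gen p i = gen p (i + 1) * gen p i * gen p (i + 1) := by
  rw [gen_of_lt (by omega : i < p - 1), gen_of_lt (by omega : i + 1 < p - 1)]
  exact PresentedGroup.mk_eq_mk_of_mul_inv_mem (Or.inr ⟨_, _, rfl, rfl⟩)

@[simp] theorem asc_zero (a : ℕ) : asc p a 0 = 1 := rfl

theorem asc_succ (a n : ℕ) : asc p a (n + 1) = asc p a n * gen p (a + n) := by
  simp [asc, List.range'_concat]

theorem asc_add (a m n : ℕ) : asc p a (m + n) = asc p a m * asc p (a + m) n := by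
  have := List.range'_append (s := a) (m := m) (n := n) (step := 1)
  rw [one_mul] at this
  simp only [asc, ← this, List.map_append, List.prod_append]

theorem gen_commute_asc_of_lt {i a n : ℕ} (h : a + n < i) : Commute (gen p i) (asc p a n) :=
  Commute.list_prod_right _ _ fun _ hx => by
    obtain ⟨j, hj, rfl⟩ := List.mem_map.mp hx
    exact (gen_commute (by rw [List.mem_range'_1] at hj; omega)).symm

theorem gen_commute_asc_of_add_two_le {i a n : ℕ} (h : i + 2 ≤ a) :
    Commute (gen p i) (asc p a n) :=
  Commute.list_prod_right _ _ fun _ hx => by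
    obtain ⟨j, hj, rfl⟩ := List.mem_map.mp hx
    exact gen_commute (by rw [List.mem_range'_1] at hj; omega)

theorem gen_succ_mul_asc {i n : ℕ} (h : i + 2 ≤ n) (hn : n ≤ p - 1) :
    gen p (i + 1) * asc p 0 n = asc p 0 n * gen p i := by
  obtain ⟨r, rfl⟩ : ∃ r, n = i + 2 + r := ⟨n - (i + 2), by omega⟩
  have hsplit :
      asc p 0 (i + 2 + r) = asc p 0 i * (gen p i * gen p (i + 1)) * asc p (i + 2) r := by
    simp only [asc_add, asc_succ, zero_add, mul_assoc]
  have hlow : Commute (gen p (i + 1)) (asc p 0 i) := gen_commute_asc_of_lt (by omega)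
  have hhigh : Commute (gen p i) (asc p (i + 2) r) := gen_commute_asc_of_add_two_le le_rfl
  rw [hsplit]
  calc gen p (i + 1) * (asc p 0 i * (gen p i * gen p (i + 1)) * asc p (i + 2) r)
      = asc p 0 i * (gen p (i + 1) * gen p i * gen p (i + 1)) * asc p (i + 2) r := by
        rw [← mul_assoc, ← mul_assoc, hlow.eq]; simp only [mul_assoc]
    _ = asc p 0 i * (gen p i * gen p (i + 1) * gen p i) * asc p (i + 2) r := by
        rw [gen_braid (by omega)]
    _ = asc p 0 i * (gen p i * gen p (i + 1)) * asc p (i + 2) r * gen p i := by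
        simp only [mul_assoc, hhigh.eq]

theorem gen_succ_mul_asc_add_two {k : ℕ} (h : k + 2 ≤ p - 1) :
    gen p (k + 1) * asc p 0 (k + 2) = asc p 0 (k + 1) * (gen p (k + 1) * gen p k) := by
  have hlow : Commute (gen p (k + 1)) (asc p 0 k) := gen_commute_asc_of_lt (by omega)
  simp only [asc_succ, zero_add]
  calc gen p (k + 1) * (asc p 0 k * gen p k * gen p (k + 1))
      = asc p 0 k * (gen p k * gen p (k + 1) * gen p k) := by
        rw [gen_braid h, ← mul_assoc, ← mul_assoc, hlow.eq]; simp only [mul_assoc]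
    _ = asc p 0 k * gen p k * (gen p (k + 1) * gen p k) := by simp only [mul_assoc]

theorem desc_succ_mul_asc {a q n : ℕ} (h : a + q + 1 ≤ n) (hn : n ≤ p - 1) :
    desc p (a + 1) q * asc p 0 n = asc p 0 n * desc p a q := by
  induction q with
  | zero => simp [desc]
  | succ q ih =>
    rw [desc, desc, mul_assoc, ih (by omega), ← mul_assoc, show a + 1 + q = a + q + 1 by omega,
      gen_succ_mul_asc (by omega) hn, mul_assoc]

theorem desc_mul_asc_succ {a q : ℕ} (h : a + q + 1 ≤ p - 1) :
    desc p (a + 1) q * asc p 0 (a + q + 1) = asc p 0 (a + q) * desc p a (q + 1) := by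
  cases q with
  | zero => simp [desc, asc_succ]
  | succ q =>
    calc desc p (a + 1) (q + 1) * asc p 0 (a + (q + 1) + 1)
        = gen p (a + q + 1) * asc p 0 (a + q + 2) * desc p a q := by
          rw [desc, mul_assoc, show a + (q + 1) + 1 = a + q + 2 by omega,
            desc_succ_mul_asc (by omega) (by omega), ← mul_assoc,
            show a + 1 + q = a + q + 1 by omega]
      _ = asc p 0 (a + (q + 1)) * desc p a (q + 1 + 1) := by
          rw [gen_succ_mul_asc_add_two (by omega), desc, desc, ← add_assoc]; simp only [mul_assoc]

theorem asc_succ_pow {L n : ℕ} (h : L + n + 1 ≤ p - 1) :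
    asc p 0 (L + n + 1) ^ (n + 1) = asc p 0 (L + n) ^ (n + 1) * desc p L (n + 1) := by
  induction n generalizing L with
  | zero => simp [desc, asc_succ]
  | succ n ih =>
    calc asc p 0 (L + (n + 1) + 1) ^ (n + 1 + 1)
        = asc p 0 (L + 1 + n + 1) ^ (n + 1) * asc p 0 (L + (n + 1) + 1) := by
          rw [pow_succ, show L + 1 + n = L + (n + 1) by omega]
      _ = asc p 0 (L + (n + 1)) ^ (n + 1) *
            (desc p (L + 1) (n + 1) * asc p 0 (L + (n + 1) + 1)) := by
          rw [ih (by omega), show L + 1 + n = L + (n + 1) by omega, mul_assoc]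
      _ = asc p 0 (L + (n + 1)) ^ (n + 1 + 1) * desc p L (n + 1 + 1) := by
          rw [desc_mul_asc_succ h, ← mul_assoc, ← pow_succ]

@[simp] theorem stair_zero_right (q : ℕ) : stair p q 0 = 1 := by
  induction q with
  | zero => rfl
  | succ q ih => simp [stair, ih]

theorem gen_commute_stair {i q L : ℕ} (h : q + L ≤ i) : Commute (gen p i) (stair p q L) := by
  induction q with
  | zero => exact Commute.one_right _
  | succ q ih => exact (gen_commute_asc_of_lt (by omega)).mul_right (ih (by omega))

theorem stair_succ_right (q L : ℕ) : stair p q (L + 1) = stair p q L * desc p L q := by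
  induction q with
  | zero => simp [stair, desc]
  | succ q ih =>
    rw [stair, stair, ih, asc_succ, desc, add_comm L q]
    calc asc p q L * gen p (q + L) * (stair p q L * desc p L q)
        = asc p q L * (gen p (q + L) * stair p q L) * desc p L q := by simp only [mul_assoc]
      _ = asc p q L * stair p q L * (gen p (q + L) * desc p L q) := by
          rw [(gen_commute_stair le_rfl).eq]; simp only [mul_assoc]

theorem asc_pow_eq_mul_stair {n L : ℕ} (h : n + L ≤ p - 1) :
    asc p 0 (n + L) ^ (n + 1) = asc p 0 n ^ (n + 1) * stair p (n + 1) L := by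
  induction L with
  | zero => simp
  | succ L ih =>
    rw [← add_assoc, add_comm n L, asc_succ_pow (by omega), add_comm L n, ih (by omega),
      stair_succ_right, mul_assoc]

theorem prod_map_finRange_eq_asc {a n : ℕ} (f : Fin n → BraidGroup p)
    (hf : ∀ j : Fin n, f j = gen p (a + j)) : ((List.finRange n).map f).prod = asc p a n := by
  rw [asc, List.range'_eq_map_range, ← List.map_coe_finRange_eq_range, List.map_map, List.map_map]
  exact congrArg List.prod (List.map_congr_left fun j _ => hf j)

theorem stair_eq_prod_finRange (q L : ℕ) :
    stair p q L = ((List.finRange q).map fun k : Fin q => asc p (q - 1 - k) L).prod := by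
  induction q with
  | zero => rfl
  | succ q ih =>
    rw [stair, ih, List.finRange_succ, List.map_cons, List.prod_cons, List.map_map]
    congr 3 with k
    simp only [Function.comp_apply, Fin.val_succ]
    congr 1; omega

end BraidGroup

open BraidGroup in
/-- In `B_p`, `(σ₁σ₂⋯σ_{p-1})^q
  = (σ₁⋯σ_{q-1})^q · (σ_q⋯σ_{p-1})(σ_{q-1}⋯σ_{p-2})⋯(σ₁⋯σ_{p-q})`. -/
theorem braid_word_identity (p q : ℕ) (hqp : q < p) :
    (((List.finRange (p - 1)).map braidσ).prod) ^ q =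
      (((List.finRange (q - 1)).map (fun i =>
          braidσ (Fin.castLE (by omega) i))).prod) ^ q *
      ((List.finRange q).map (fun (k : Fin q) =>
          ((List.finRange (p - q)).map (fun (j : Fin (p - q)) =>
              braidσ (⟨q - 1 - (k : ℕ) + (j : ℕ), by
                have hk := k.isLt; have hj := j.isLt; omega⟩ : Fin (p - 1)))).prod)).prod := by
  have key : asc p 0 (p - 1) ^ q = asc p 0 (q - 1) ^ q * stair p q (p - q) := by
    rcases q with _ | n
    · simp [stair]
    · simpa [show n + (p - (n + 1)) = p - 1 by omega] using
        asc_pow_eq_mul_stair (p := p) (n := n) (L := p - (n + 1)) (by omega)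
  rw [prod_map_finRange_eq_asc (a := 0) _ fun j => by rw [zero_add, gen_of_lt],
    prod_map_finRange_eq_asc (a := 0) _ fun j => by rw [zero_add, gen_of_lt]; rfl, key,
    stair_eq_prod_finRange]
  refine congrArg _ (congrArg List.prod (List.map_congr_left fun k _ => ?_))
  exact (prod_map_finRange_eq_asc _ fun j => (gen_of_lt _).symm).symm
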